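/- arXiv:2507.22655 — 3 statements merged into one kernel-verified Lean document; each statement's English description precedes it below -/
import Mathlib

section
/- Let P be the convex hull of finitely many probability distributions p₁,…,p_m on {-1,1}^n. A voting rule φ is weakly P-robust (for each p ∈ P there is some i with rᵢ(φ,p) ≥ 1/2) if and only if there exists a nonnegative weight vector w ∈ ℝ₊^n, w ≠ 0, such that (∑ᵢ wᵢ rᵢ(φ,pⱼ))/(∑ᵢ wᵢ) ≥ 1/2 for every j = 1,…,m. -/
open Finset

/-- The real value of a ±1 vote encoded as a `Bool` (`true ↦ 1`, `false ↦ -1`). -/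
def sg (b : Bool) : ℝ := if b then 1 else -1

/-- Responsiveness of individual `i` under rule `φ` and distribution `p`. -/
def resp {n : ℕ} (φ : (Fin n → Bool) → Bool) (p : (Fin n → Bool) → ℝ) (i : Fin n) : ℝ :=
  ∑ x : Fin n → Bool, if φ x = x i then p x else 0

/-- `p` is a probability distribution on profiles. -/
def IsProb {n : ℕ} (p : (Fin n → Bool) → ℝ) : Prop :=
  (∀ x, 0 ≤ p x) ∧ ∑ x : Fin n → Bool, p x = 1

lemma resp_lin {n m : ℕ} (φ : (Fin n → Bool) → Bool) (ps : Fin m → (Fin n → Bool) → ℝ)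
    (lam : Fin m → ℝ) (i : Fin n) :
    resp φ (fun x => ∑ j, lam j * ps j x) i = ∑ j, lam j * resp φ (ps j) i := by
  unfold resp
  have h : ∀ x : Fin n → Bool, (if φ x = x i then ∑ j, lam j * ps j x else 0)
      = ∑ j, if φ x = x i then lam j * ps j x else 0 := by
    intro x; split <;> simp
  simp_rw [h]
  rw [Finset.sum_comm]
  simp [mul_ite, mul_zero, Finset.mul_sum]

/-- for `P` the convex hull of `p₁,…,p_m`, `φ` is weakly `P`-robust iff there
is a nonnegative nonzero weight vector whose weighted average responsiveness is at least
one-half at every `pⱼ`. -/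
theorem stmt_8 (n m : ℕ) (hm : 0 < m) (φ : (Fin n → Bool) → Bool)
    (ps : Fin m → (Fin n → Bool) → ℝ) (hps : ∀ j, IsProb (ps j)) :
    (∀ lam : Fin m → ℝ, (∀ j, 0 ≤ lam j) → (∑ j, lam j) = 1 →
        ∃ i, (1 : ℝ) / 2 ≤ resp φ (fun x => ∑ j, lam j * ps j x) i) ↔
    (∃ w : Fin n → ℝ, (∀ i, 0 ≤ w i) ∧ w ≠ 0 ∧
        ∀ j, (1 : ℝ) / 2 ≤ (∑ i, w i * resp φ (ps j) i) / (∑ i, w i)) := by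
  constructor
  · intro hrob
    rcases Nat.eq_zero_or_pos n with hn | hn
    · exfalso
      subst hn
      obtain ⟨i, _⟩ := hrob (fun j => if j = ⟨0, hm⟩ then 1 else 0)
        (fun j => by by_cases hj : j = ⟨0, hm⟩ <;> simp [hj]) (by simp)
      exact i.elim0
    -- setup
    set a : Fin m → (Fin n → ℝ) := fun j i => resp φ (ps j) i - 1/2 with ha
    set S : Set (Fin n → ℝ) := {x | ∃ lam : Fin m → ℝ, (∀ j, 0 ≤ lam j) ∧ (∑ j, lam j) = 1 ∧
      x = fun i => ∑ j, lam j * a j i} with hSdef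
    set O : Set (Fin n → ℝ) := {y | ∀ i, y i < 0} with hOdef
    have hOconv : Convex ℝ O := by
      intro y hy z hz s t hs ht hst
      intro i
      simp only [Pi.add_apply, Pi.smul_apply, smul_eq_mul]
      have hy' := hy i
      have hz' := hz i
      rcases hs.lt_or_eq with hs' | hs'
      · have h1 : s * y i < 0 := mul_neg_of_pos_of_neg hs' hy'
        have h2 : t * z i ≤ 0 := mul_nonpos_of_nonneg_of_nonpos ht hz'.le
        linarith
      · have ht1 : t = 1 := by linarith
        rw [← hs', ht1]
        simpa using hz'
    have hOopen : IsOpen O := by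
      have : O = ⋂ i, {y : Fin n → ℝ | y i < 0} := by ext y; simp [hOdef]
      rw [this]
      exact isOpen_iInter_of_finite fun i => isOpen_lt (continuous_apply i) continuous_const
    have hSconv : Convex ℝ S := by
      rintro x ⟨l1, hl1, hs1, rfl⟩ y ⟨l2, hl2, hs2, rfl⟩ s t hs ht hst
      refine ⟨fun j => s * l1 j + t * l2 j,
        fun j => add_nonneg (mul_nonneg hs (hl1 j)) (mul_nonneg ht (hl2 j)), ?_, ?_⟩
      · rw [Finset.sum_add_distrib, ← Finset.mul_sum, ← Finset.mul_sum, hs1, hs2]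
        linarith
      · funext i
        simp only [Pi.add_apply, Pi.smul_apply, smul_eq_mul]
        rw [Finset.mul_sum, Finset.mul_sum, ← Finset.sum_add_distrib]
        congr 1; funext j; ring
    have hdisj : Disjoint O S := by
      rw [Set.disjoint_left]
      rintro y hyO ⟨lam, hlam, hsum, rfl⟩
      obtain ⟨i, hi⟩ := hrob lam hlam hsum
      rw [resp_lin] at hi
      have hyi := hyO i
      have : (∑ j, lam j * a j i) = (∑ j, lam j * resp φ (ps j) i) - 1/2 := by
        simp only [ha, mul_sub]
        rw [Finset.sum_sub_distrib, ← Finset.sum_mul, hsum]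
        ring
      simp only [Set.mem_setOf_eq] at hyi
      rw [this] at hyi
      linarith
    obtain ⟨f, u, hfO, hfS⟩ := geometric_hahn_banach_open hOconv hOopen hSconv hdisj
    set e : Fin n → (Fin n → ℝ) := fun i j => if i = j then 1 else 0 with he
    set w : Fin n → ℝ := fun i => f (e i) with hwdef
    have hf_repr : ∀ x : Fin n → ℝ, f x = ∑ i, x i * w i := by
      intro x
      conv_lhs => rw [pi_eq_sum_univ x]
      rw [map_sum]
      simp [hwdef, he]
    set Sw : ℝ := ∑ i, w i with hSwdef
    have hconst : ∀ c : ℝ, f (fun _ => c) = c * Sw := by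
      intro c; rw [hf_repr]; simp [hSwdef, Finset.mul_sum]
    have hOmem : ∀ ε : ℝ, 0 < ε → (fun _ => -ε : Fin n → ℝ) ∈ O := by
      intro ε hε i; simpa using hε
    have hneg1 : -Sw < u := by
      have := hfO _ (hOmem 1 one_pos)
      rwa [hconst, neg_one_mul] at this
    have hu0 : 0 ≤ u := by
      by_contra h
      push_neg at h
      have hSw : 0 < Sw := by linarith
      have hε : 0 < -u / (2 * Sw) := div_pos (by linarith) (by linarith)
      have h2 := hfO _ (hOmem _ hε)
      rw [hconst] at h2
      have h3 : -(-u / (2 * Sw)) * Sw = u / 2 := by field_simp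
      rw [h3] at h2
      linarith
    have hw0 : ∀ i, 0 ≤ w i := by
      intro i
      by_contra h
      push_neg at h
      set t : ℝ := (u + Sw + 1) / (-w i) with htdef
      have htpos : 0 < t := div_pos (by linarith) (by linarith)
      have hymem : ((fun _ => (-1 : ℝ)) + (-t) • e i) ∈ O := by
        intro j
        simp only [Pi.add_apply, Pi.smul_apply, smul_eq_mul, he]
        split <;> nlinarith
      have h2 := hfO _ hymem
      rw [map_add, map_smul, hconst, smul_eq_mul] at h2
      have h3 : (-t) * f (e i) = u + Sw + 1 := by
        have hfe : f (e i) = w i := rfl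
        have hne : -w i ≠ 0 := ne_of_gt (by linarith)
        calc (-t) * f (e i) = t * (-w i) := by rw [hfe]; ring
          _ = u + Sw + 1 := by rw [htdef]; exact div_mul_cancel₀ _ hne
      rw [h3] at h2
      linarith
    have hmem : ∀ j, a j ∈ S := by
      intro j
      refine ⟨fun k => if k = j then 1 else 0,
        fun k => by by_cases hk : k = j <;> simp [hk], by simp, ?_⟩
      funext i
      simp [ite_mul]
    have hSw0 : 0 < Sw := by
      rcases lt_or_eq_of_le (Finset.sum_nonneg fun i _ => hw0 i : (0:ℝ) ≤ Sw) with h | h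
      · exact h
      · exfalso
        have hall : ∀ i, w i = 0 := by
          intro i
          have := (Finset.sum_eq_zero_iff_of_nonneg (fun i _ => hw0 i)).mp h.symm
          exact this i (Finset.mem_univ i)
        have hj := hfS _ (hmem ⟨0, hm⟩)
        rw [hf_repr] at hj
        have hz : (∑ i, a ⟨0, hm⟩ i * w i) = 0 :=
          Finset.sum_eq_zero fun i _ => by rw [hall i]; ring
        rw [hz] at hj
        linarith
    have hwne : w ≠ 0 := by
      intro h
      rw [hSwdef, h] at hSw0
      simp at hSw0
    refine ⟨w, hw0, hwne, fun j => ?_⟩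
    rw [le_div_iff₀ hSw0]
    have h1 := hfS _ (hmem j)
    rw [hf_repr] at h1
    have h2 : (∑ i, a j i * w i) = (∑ i, w i * resp φ (ps j) i) - Sw / 2 := by
      rw [hSwdef, Finset.sum_div, ← Finset.sum_sub_distrib]
      refine Finset.sum_congr rfl fun i _ => ?_
      simp only [ha]; ring
    rw [h2] at h1
    linarith
  · rintro ⟨w, hw0, hwne, hw⟩ lam hlam hsum
    obtain ⟨i₀, hi₀⟩ := Function.ne_iff.mp hwne
    have hi₀pos : 0 < w i₀ := (hw0 i₀).lt_of_ne (Ne.symm hi₀)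
    have hSw : 0 < ∑ i, w i :=
      Finset.sum_pos' (fun i _ => hw0 i) ⟨i₀, Finset.mem_univ i₀, hi₀pos⟩
    by_contra h
    push_neg at h
    have key : ∀ j, (1/2) * (∑ i, w i) ≤ ∑ i, w i * resp φ (ps j) i := by
      intro j
      have := hw j
      rw [le_div_iff₀ hSw] at this
      linarith
    have h1 : (∑ i, w i * resp φ (fun x => ∑ j, lam j * ps j x) i) < (1/2) * ∑ i, w i := by
      have := Finset.sum_lt_sum (s := Finset.univ)
        (f := fun i => w i * resp φ (fun x => ∑ j, lam j * ps j x) i)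
        (g := fun i => w i * (1/2))
        (fun i _ => mul_le_mul_of_nonneg_left (h i).le (hw0 i))
        ⟨i₀, Finset.mem_univ i₀, mul_lt_mul_of_pos_left (h i₀) hi₀pos⟩
      calc (∑ i, w i * resp φ (fun x => ∑ j, lam j * ps j x) i)
          < ∑ i, w i * (1/2) := this
        _ = (1/2) * ∑ i, w i := by rw [← Finset.sum_mul]; ring
    have h2 : (1/2) * (∑ i, w i) ≤ ∑ i, w i * resp φ (fun x => ∑ j, lam j * ps j x) i := by
      have hrw : (∑ i, w i * resp φ (fun x => ∑ j, lam j * ps j x) i)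
          = ∑ j, lam j * ∑ i, w i * resp φ (ps j) i := by
        simp_rw [resp_lin, Finset.mul_sum]
        rw [Finset.sum_comm]
        exact Finset.sum_congr rfl fun j _ => Finset.sum_congr rfl fun i _ => by ring
      rw [hrw]
      calc (1/2) * (∑ i, w i) = ∑ j, lam j * ((1/2) * ∑ i, w i) := by
            rw [← Finset.sum_mul, hsum, one_mul]
        _ ≤ ∑ j, lam j * ∑ i, w i * resp φ (ps j) i :=
            Finset.sum_le_sum fun j _ => mul_le_mul_of_nonneg_left (key j) (hlam j)
    linarith
end

section
/- A deterministic voting rule φ is robust (for every probability distribution p on {-1,1}^n, there exists i with rᵢ(φ,p) > 1/2) if and only if φ is a weighted majority rule with nonnegative weights having no ties, i.e., there exists w ∈ ℝ₊^n, w ≠ 0, with φ(x)·∑ᵢ wᵢxᵢ > 0 for all x. -/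
open Finset

/-! Both sides are statements about the matrix `M x i = sg (φ x) * sg (x i)`: robustness says that
for every distribution `p` some coordinate of `p ᵥ* M = 2 r(φ, p) - 1` is positive, and being a
weighted majority rule without ties says that `M *ᵥ w` is positive for some `w ≥ 0`. These are
equivalent by Ville's theorem of the alternative: one direction is `p ⬝ᵥ (M *ᵥ w) = (p ᵥ* M) ⬝ᵥ w`,
the other separates the image of the simplex under `p ↦ p ᵥ* M` from the nonpositive orthant. -/

open Matrix

section Ville

variable {ι κ : Type*} [Fintype ι] [Fintype κ]

lemma exists_pos_of_dotProduct_pos {u w : κ → ℝ} (hw : 0 ≤ w) (h : 0 < u ⬝ᵥ w) :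
    ∃ k, 0 < u k := by
  by_contra! hu
  exact h.not_ge (Finset.sum_nonpos fun k _ => mul_nonpos_of_nonpos_of_nonneg (hu k) (hw k))

lemma dotProduct_pos_of_mem_stdSimplex {p u : ι → ℝ} (hp : p ∈ stdSimplex ℝ ι)
    (hu : ∀ x, 0 < u x) : 0 < p ⬝ᵥ u := by
  obtain ⟨x, -, hx⟩ : ∃ x ∈ univ, (0 : ι → ℝ) x < p x :=
    exists_lt_of_sum_lt (by simp [hp.2])
  exact sum_pos' (fun y _ => mul_nonneg (hp.1 y) (hu y).le) ⟨x, mem_univ x, mul_pos hx (hu x)⟩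

lemma exists_nonneg_mulVec_pos_of_forall_stdSimplex (M : Matrix ι κ ℝ)
    (h : ∀ p ∈ stdSimplex ℝ ι, ∃ k, 0 < (p ᵥ* M) k) :
    ∃ w, 0 ≤ w ∧ ∀ x, 0 < (M *ᵥ w) x := by
  classical
  have hdisj : Disjoint (Set.Iic (0 : κ → ℝ)) (M.vecMulLinear '' stdSimplex ℝ ι) := by
    rw [Set.disjoint_right]
    rintro _ ⟨p, hp, rfl⟩ hle
    obtain ⟨k, hk⟩ := h p hp
    exact hk.not_ge (hle k)
  obtain ⟨f, u, v, hfK, huv, hfC⟩ := geometric_hahn_banach_closed_compact (convex_Iic 0)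
    isClosed_Iic ((convex_stdSimplex ℝ ι).linear_image _)
    ((isCompact_stdSimplex ℝ ι).image M.vecMulLinear.continuous_of_finiteDimensional) hdisj
  set w : κ → ℝ := fun k => f (Pi.single k 1)
  have hf : ∀ a, f a = a ⬝ᵥ w := fun a => by
    conv_lhs => rw [← univ_sum_single a]
    refine (map_sum f _ _).trans (sum_congr rfl fun k _ => ?_)
    have hsingle : Pi.single k (a k) = a k • Pi.single k (1 : ℝ) := by
      rw [← Pi.single_smul', smul_eq_mul, mul_one]
    rw [hsingle, map_smul, smul_eq_mul]
  have hu : 0 < u := by simpa using hfK 0 (Set.mem_Iic.2 le_rfl)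
  refine ⟨w, fun k => ?_, fun x => ?_⟩
  · by_contra! hneg
    have hle : (u / w k) • Pi.single k (1 : ℝ) ≤ 0 := fun j => by
      by_cases hj : j = k
      · subst hj; simpa using div_nonpos_of_nonneg_of_nonpos hu.le hneg.le
      · simp [hj]
    have := hfK _ hle
    rw [map_smul, smul_eq_mul, div_mul_cancel₀ _ hneg.ne] at this
    exact this.false
  · have hx := hfC _ ⟨Pi.single x 1, single_mem_stdSimplex ℝ x, rfl⟩
    simp only [hf, coe_vecMulLinear, single_vecMul, one_smul] at hx
    exact hu.trans (huv.trans hx)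

theorem exists_nonneg_mulVec_pos_iff (M : Matrix ι κ ℝ) :
    (∃ w, 0 ≤ w ∧ ∀ x, 0 < (M *ᵥ w) x) ↔ ∀ p ∈ stdSimplex ℝ ι, ∃ k, 0 < (p ᵥ* M) k := by
  refine ⟨fun ⟨w, hw, hpos⟩ p hp => ?_, exists_nonneg_mulVec_pos_of_forall_stdSimplex M⟩
  refine exists_pos_of_dotProduct_pos hw ?_
  rw [← dotProduct_mulVec]
  exact dotProduct_pos_of_mem_stdSimplex hp hpos

end Ville

section Voting

variable {n : ℕ} (φ : (Fin n → Bool) → Bool)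

def agreementMatrix : Matrix (Fin n → Bool) (Fin n) ℝ :=
  Matrix.of fun x i => sg (φ x) * sg (x i)

lemma sg_mul_sg (a b : Bool) : sg a * sg b = if a = b then 1 else -1 := by
  cases a <;> cases b <;> simp [sg]

lemma vecMul_agreementMatrix {p : (Fin n → Bool) → ℝ} (hp : IsProb p) (i : Fin n) :
    (p ᵥ* agreementMatrix φ) i = 2 * resp φ p i - 1 := by
  simp only [vecMul, dotProduct, agreementMatrix, of_apply]
  rw [← hp.2, resp, mul_sum, ← sum_sub_distrib]
  refine sum_congr rfl fun x _ => ?_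
  rw [sg_mul_sg]
  split_ifs <;> ring

lemma agreementMatrix_mulVec (w : Fin n → ℝ) (x : Fin n → Bool) :
    (agreementMatrix φ *ᵥ w) x = sg (φ x) * ∑ i, w i * sg (x i) := by
  simp only [mulVec, dotProduct, agreementMatrix, of_apply, mul_sum]
  exact sum_congr rfl fun i _ => by ring

end Voting

/-- `φ` is robust iff it is a WMR with nonnegative weights and no ties. -/
theorem stmt_9 (n : ℕ) (φ : (Fin n → Bool) → Bool) :
    (∀ p, IsProb p → ∃ i, (1 : ℝ) / 2 < resp φ p i) ↔
    (∃ w : Fin n → ℝ, (∀ i, 0 ≤ w i) ∧ w ≠ 0 ∧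
        ∀ x, 0 < sg (φ x) * ∑ i, w i * sg (x i)) := by
  have hrobust : (∀ p, IsProb p → ∃ i, (1 : ℝ) / 2 < resp φ p i) ↔
      ∀ p ∈ stdSimplex ℝ _, ∃ i, 0 < (p ᵥ* agreementMatrix φ) i :=
    forall₂_congr fun p hp => exists_congr fun i => by
      rw [vecMul_agreementMatrix φ hp]
      constructor <;> intro <;> linarith
  rw [hrobust, ← exists_nonneg_mulVec_pos_iff]
  simp only [agreementMatrix_mulVec, Pi.le_def, Pi.zero_apply]
  refine exists_congr fun w => ⟨fun ⟨hw, hpos⟩ => ⟨hw, ?_, hpos⟩, fun ⟨hw, _, hpos⟩ => ⟨hw, hpos⟩⟩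
  rintro rfl
  simpa using hpos fun _ => true
end

section
/- If a voting rule φ is a weighted majority rule with weight vector w, then for every probability distribution p on {-1,1}^n, ∑ᵢ wᵢ rᵢ(φ,p) = max_{φ'∈Φ} ∑ᵢ wᵢ rᵢ(φ',p), where the max is over all voting rules φ' : {-1,1}^n → {-1,1}. Conversely, if this maximization equality holds for some fixed p with full support (p(x) > 0 for all x), then φ is a WMR with weights w. -/
open Finset

lemma key (n : ℕ) (w : Fin n → ℝ) (φ : (Fin n → Bool) → Bool) (p : (Fin n → Bool) → ℝ) :
    ∑ i, w i * resp φ p i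
      = ∑ x : Fin n → Bool, p x * ((∑ i, w i) + sg (φ x) * ∑ i, w i * sg (x i)) / 2 := by
  unfold resp
  simp only [Finset.mul_sum]
  rw [Finset.sum_comm]
  refine Finset.sum_congr rfl fun x _ => ?_
  have h : ∀ i, w i * (if φ x = x i then p x else 0)
      = (w i * p x + sg (φ x) * (w i * sg (x i)) * p x) / 2 := by
    intro i
    by_cases hc : φ x = x i
    · simp only [hc, if_pos rfl]
      cases x i <;> simp [sg] <;> ring
    · rw [if_neg hc]
      have : φ x = !(x i) := by
        cases h1 : φ x <;> cases h2 : x i <;> simp_all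
      rw [this]
      cases x i <;> simp [sg] <;> ring
  simp only [h, ← Finset.sum_div, Finset.sum_add_distrib, ← Finset.sum_mul, ← Finset.mul_sum]
  ring

/-- RTF theorem: a WMR with weights `w` maximizes the `w`-weighted sum of
responsiveness over all voting rules under every distribution; conversely, if it does so
under some full-support distribution, it is a WMR with weights `w`. -/
theorem stmt_18 (n : ℕ) (φ : (Fin n → Bool) → Bool) (w : Fin n → ℝ) (hw : w ≠ 0) :
    ((∀ x, 0 ≤ sg (φ x) * ∑ i, w i * sg (x i)) →
      ∀ p, IsProb p → ∀ φ' : (Fin n → Bool) → Bool,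
        (∑ i, w i * resp φ' p i) ≤ ∑ i, w i * resp φ p i) ∧
    (∀ p, IsProb p → (∀ x, 0 < p x) →
      (∀ φ' : (Fin n → Bool) → Bool,
        (∑ i, w i * resp φ' p i) ≤ ∑ i, w i * resp φ p i) →
      ∀ x, 0 ≤ sg (φ x) * ∑ i, w i * sg (x i)) := by
  constructor
  · intro hwmr p hp φ'
    rw [key, key]
    refine Finset.sum_le_sum fun x _ => ?_
    have hpx := hp.1 x
    have h1 := hwmr x
    have h2 : sg (φ' x) * ∑ i, w i * sg (x i) ≤ sg (φ x) * ∑ i, w i * sg (x i) := by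
      by_cases hc : φ' x = φ x
      · rw [hc]
      · have : sg (φ' x) = -sg (φ x) := by
          cases h1 : φ x <;> cases h2 : φ' x <;> simp_all [sg]
        rw [this]; nlinarith
    have := mul_le_mul_of_nonneg_left h2 hpx
    nlinarith
  · intro p hp hpos hmax x
    set φ' : (Fin n → Bool) → Bool := fun y => if y = x then !(φ x) else φ y with hφ'
    have h := hmax φ'
    rw [key, key] at h
    have hdiff : ∀ y : Fin n → Bool,
        p y * ((∑ i, w i) + sg (φ' y) * ∑ i, w i * sg (y i)) / 2
          ≤ p y * ((∑ i, w i) + sg (φ y) * ∑ i, w i * sg (y i)) / 2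
          ∨ y = x := by
      intro y
      by_cases hc : y = x
      · right; exact hc
      · left; simp [hφ', hc]
    -- subtract the sums: all terms equal except at x
    have hsum : ∑ y : Fin n → Bool, (p y * ((∑ i, w i) + sg (φ y) * ∑ i, w i * sg (y i)) / 2
        - p y * ((∑ i, w i) + sg (φ' y) * ∑ i, w i * sg (y i)) / 2)
        = p x * (sg (φ x) - sg (φ' x)) * (∑ i, w i * sg (x i)) / 2 := by
      rw [Finset.sum_eq_single x]
      · have : φ' x = !(φ x) := by simp [hφ']
        rw [this]; ring
      · intro y _ hy
        simp [hφ', hy]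
      · simp
    rw [Finset.sum_sub_distrib] at hsum
    have h2 : 0 ≤ p x * (sg (φ x) - sg (φ' x)) * (∑ i, w i * sg (x i)) / 2 := by
      rw [← hsum]; linarith
    have h3 : sg (φ x) - sg (φ' x) = 2 * sg (φ x) := by
      have : φ' x = !(φ x) := by simp [hφ']
      rw [this]; cases φ x <;> simp [sg] <;> ring
    rw [h3] at h2
    have hpx := hpos x
    nlinarith
end
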